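/- arXiv:1504.00997 — 5 statements merged into one kernel-verified Lean document; each statement's English description precedes it below -/
import Mathlib

section
/- For every n ≥ 4 and every 2 ≤ j ≤ n−2, the number of standard Young tableaux of shape (j, 2, 1^{n−j−2}) equals the number of pairs (W, a) where W is a j-element subset of {1,...,n} and a is a non-minimal element of the set m(W), where m(W) is the set of minima of the connected components of C_n[W] if 1 ∉ W, and the set of minima of the connected components of C_n[complement of W] if 1 ∈ W. -/
/-!
A standard Young tableau of shape `(j, 2, 1^{n-j-2})` is determined by its first row `R`, which
contains `1`, and the entry `a` in box `(2,2)`: the first column then holds `1` and the rest of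
`{1,…,n} \ (R ∪ {a})`, and the only constraints are that some element of `R \ {1}` and some
element outside `R ∪ {a}` lie below `a`.

As `1` is the vertex where `C_n` closes up, for `1 ∉ V` the components of `C_n[V]` are intervals,
whose minima are the `x ∈ V` with `x - 1 ∉ V`. If `a - 1 ∈ R`, take `W = R`: then `a` is the
minimum of a component of the complement of `W`, and not the least one because the entry to the
left of `a` is smaller. Otherwise take `W = (R \ {1}) ∪ {a}`: then `a` is the minimum of a
component of `W`, and not the least one because the entry above `a` is smaller. The two cases are
told apart by whether `1 ∈ W`, and `R` is recovered as `W` or as `(W \ {a}) ∪ {1}`.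
-/

open scoped Classical

noncomputable section

/-- The cycle graph `C_n` on vertex set `{1,...,n}` (as a graph on `ℕ`):
`i ~ j` iff both lie in `{1,...,n}` and `i - j ≡ ±1 (mod n)`. -/
def cycleGraph (n : ℕ) : SimpleGraph ℕ where
  Adj i j := i ∈ Set.Icc 1 n ∧ j ∈ Set.Icc 1 n ∧ i ≠ j ∧
    ((i + 1) % n = j % n ∨ (j + 1) % n = i % n)
  symm := ⟨fun i j h => ⟨h.2.1, h.1, h.2.2.1.symm, h.2.2.2.symm⟩⟩
  loopless := ⟨fun i h => h.2.2.1 rfl⟩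

/-- Number of connected components of the induced subgraph `C_n[W]`. -/
def numComponents (n : ℕ) (W : Set ℕ) : ℕ :=
  Nat.card ((cycleGraph n).induce W).ConnectedComponent

/-- The set of minima of the connected components of `C_n[W]`. -/
def compMins (n : ℕ) (W : Set ℕ) : Set ℕ :=
  {a | ∃ ha : a ∈ W, ∀ b, ∀ hb : b ∈ W,
    ((cycleGraph n).induce W).Reachable ⟨a, ha⟩ ⟨b, hb⟩ → a ≤ b}

/-- `m(W)`: component minima of `C_n[complement of W]` if `1 ∈ W`,
of `C_n[W]` otherwise. -/
def mSet (n : ℕ) (W : Set ℕ) : Set ℕ :=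
  if 1 ∈ W then compMins n (Set.Icc 1 n \ W) else compMins n W

/-- The cells of the Young diagram of shape `(j, 2, 1^{n-j-2})`, 0-indexed:
row `0` has `j` boxes, row `1` has `2` boxes, rows `2,...,n-j-1` have one box. -/
def cell (n j : ℕ) (p : ℕ × ℕ) : Prop :=
  (p.1 = 0 ∧ p.2 < j) ∨ (p.1 = 1 ∧ p.2 < 2) ∨ (2 ≤ p.1 ∧ p.1 < n - j ∧ p.2 = 0)

/-- `T` is a standard Young tableau of shape `(j, 2, 1^{n-j-2})`:
zero outside the diagram, a bijection from the cells onto `{1,...,n}`,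
strictly increasing along rows and columns. -/
def IsSYT (n j : ℕ) (T : ℕ × ℕ → ℕ) : Prop :=
  (∀ p, ¬ cell n j p → T p = 0) ∧
  Set.BijOn T {p | cell n j p} (Set.Icc 1 n) ∧
  (∀ p q : ℕ × ℕ, cell n j p → cell n j q → p.1 = q.1 → p.2 < q.2 → T p < T q) ∧
  (∀ p q : ℕ × ℕ, cell n j p → cell n j q → p.2 = q.2 → p.1 < q.1 → T p < T q)

/-- `a_T = T(2,2)` (0-indexed: the entry at position `(1,1)`). -/
def aT (T : ℕ × ℕ → ℕ) : ℕ := T (1, 1)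

/-- `W_T`: the set of first-row entries of `T` if `a_T - 1` lies in the first row,
and `{T(2,2)} ∪ {T(1,i) : 2 ≤ i ≤ j}` if `a_T - 1` lies in the first column. -/
def WT (j : ℕ) (T : ℕ × ℕ → ℕ) : Set ℕ :=
  if ∃ c < j, T (0, c) = T (1, 1) - 1 then T '' {p : ℕ × ℕ | p.1 = 0 ∧ p.2 < j}
  else {T (1, 1)} ∪ T '' {p : ℕ × ℕ | p.1 = 0 ∧ 1 ≤ p.2 ∧ p.2 < j}

/-- The filling with the elements of `W` in increasing order in the first row,
`a` at position `(2,2)`, and the elements of `({1,...,n} \ W) \ {a}` in increasing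
order in the remaining boxes of the first column. -/
def fillRow (n j : ℕ) (W : Set ℕ) (a : ℕ) : ℕ × ℕ → ℕ := fun p =>
  if p.1 = 0 ∧ p.2 < j then Nat.nth (· ∈ W) p.2
  else if p = (1, 1) then a
  else if p.2 = 0 ∧ 1 ≤ p.1 ∧ p.1 < n - j then
    Nat.nth (· ∈ (Set.Icc 1 n \ W) \ {a}) (p.1 - 1)
  else 0

/-- The filling with the elements of `{1,...,n} \ W` in increasing order in the
first column, `a` at position `(2,2)`, and the elements of `W \ {a}` in increasing
order in the remaining boxes of the first row. -/
def fillCol (n j : ℕ) (W : Set ℕ) (a : ℕ) : ℕ × ℕ → ℕ := fun p =>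
  if p.2 = 0 ∧ p.1 < n - j then Nat.nth (· ∈ Set.Icc 1 n \ W) p.1
  else if p = (1, 1) then a
  else if p.1 = 0 ∧ 1 ≤ p.2 ∧ p.2 < j then Nat.nth (· ∈ W \ {a}) (p.2 - 1)
  else 0

/-- `S(j,n)`: pairs `(W, a)` with `W` a `j`-subset of `{1,...,n}` and `a` a
non-minimal element of `m(W)`. -/
def SpairSet (n j : ℕ) : Set (Set ℕ × ℕ) :=
  {p | p.1 ⊆ Set.Icc 1 n ∧ p.1.ncard = j ∧ p.2 ∈ mSet n p.1 ∧ p.2 ≠ sInf (mSet n p.1)}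

end

open Set

section NthOfFinite

variable {S : Set ℕ}

lemma card_toFinset_ofPred_mem (hS : (Set.ofPred (· ∈ S)).Finite) :
    hS.toFinset.card = S.ncard :=
  (ncard_eq_toFinset_card S hS).symm

lemma nth_mem_of_lt_ncard (hS : S.Finite) {i : ℕ} (hi : i < S.ncard) : Nat.nth (· ∈ S) i ∈ S :=
  Nat.nth_mem_of_lt_card hS (by rwa [card_toFinset_ofPred_mem])

lemma nth_strictMonoOn_Iio_ncard (hS : S.Finite) :
    StrictMonoOn (Nat.nth (· ∈ S)) (Iio S.ncard) := by
  simpa only [card_toFinset_ofPred_mem] using Nat.nth_strictMonoOn (p := (· ∈ S)) hS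

lemma exists_lt_ncard_nth_eq (hS : S.Finite) {x : ℕ} (hx : x ∈ S) :
    ∃ i < S.ncard, Nat.nth (· ∈ S) i = x := by
  have := Nat.exists_lt_card_finite_nth_eq (p := (· ∈ S)) hS hx
  rwa [card_toFinset_ofPred_mem] at this

lemma image_nth_Iio_ncard (hS : S.Finite) : Nat.nth (· ∈ S) '' Iio S.ncard = S := by
  have := Nat.image_nth_Iio_card (p := (· ∈ S)) hS
  rwa [card_toFinset_ofPred_mem] at this

lemma eqOn_nth_of_strictMonoOn_of_mapsTo (hS : S.Finite) {f : ℕ → ℕ}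
    (hmono : StrictMonoOn f (Iio S.ncard)) (hmaps : MapsTo f (Iio S.ncard) S) :
    EqOn f (Nat.nth (· ∈ S)) (Iio S.ncard) := by
  have himage : f '' Iio S.ncard = S :=
    eq_of_subset_of_ncard_le hmaps.image_subset (by rw [hmono.injOn.ncard_image, ncard_Iio_nat]) hS
  have hidx : {i | ∀ hf : (Set.ofPred (· ∈ S)).Finite, i < hf.toFinset.card} = Iio S.ncard := by
    ext i
    simp only [card_toFinset_ofPred_mem, mem_Iio]
    exact ⟨fun h => h hS, fun h _ => h⟩
  have := Nat.eq_nth_of_strictMonoOn_of_mapsTo_of_surjOn (p := (· ∈ S)) f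
  rw [hidx] at this
  exact this (fun x hx => (himage.symm ▸ hx : x ∈ f '' Iio S.ncard)) hmaps hmono

lemma nth_one_le {x : ℕ} (hx : x ∈ S) (h : Nat.nth (· ∈ S) 0 < x) : Nat.nth (· ∈ S) 1 ≤ x :=
  not_lt.1 fun h' => (Nat.le_nth_of_lt_nth_succ h' hx).not_gt h

lemma nth_zero_eq_one (h1 : 1 ∈ S) (h0 : 0 ∉ S) : Nat.nth (· ∈ S) 0 = 1 := by
  rw [Nat.nth_zero]
  exact le_antisymm (Nat.sInf_le h1)
    (Nat.one_le_iff_ne_zero.2 fun h => h0 (h ▸ Nat.sInf_mem ⟨1, h1⟩))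

end NthOfFinite

section NatSInf

lemma ne_sInf_iff_exists_lt {V : Set ℕ} {a : ℕ} (ha : a ∈ V) : a ≠ sInf V ↔ ∃ x ∈ V, x < a := by
  constructor
  · exact fun h => ⟨sInf V, Nat.sInf_mem ⟨a, ha⟩, lt_of_le_of_ne (Nat.sInf_le ha) h.symm⟩
  · rintro ⟨x, hx, hxa⟩ rfl
    exact (Nat.sInf_le hx).not_gt hxa

lemma sInf_setOf_sub_one_notMem {V : Set ℕ} (h0 : 0 ∉ V) :
    sInf {a | a ∈ V ∧ a - 1 ∉ V} = sInf V := by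
  rcases V.eq_empty_or_nonempty with rfl | hV
  · simp
  have hmin := Nat.sInf_mem hV
  have hpos : 0 < sInf V := Nat.pos_of_ne_zero fun h => h0 (h ▸ hmin)
  refine IsLeast.csInf_eq ⟨⟨hmin, fun h => ?_⟩, fun x hx => Nat.sInf_le hx.1⟩
  exact (Nat.sInf_le h).not_gt (Nat.sub_lt hpos one_pos)

end NatSInf

section CycleGraph

variable {n : ℕ}

lemma eq_succ_of_succ_mod_eq {x y : ℕ} (hx : x ∈ Icc 1 n) (hy : y ∈ Icc 2 n)
    (h : (x + 1) % n = y % n) : y = x + 1 := by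
  refine (Nat.ModEq.eq_of_abs_lt h (abs_sub_lt_iff.2 ⟨?_, ?_⟩)).symm <;>
    simp only [mem_Icc] at hx hy <;> push_cast <;> omega

lemma cycleGraph_adj_of_ne_one {x y : ℕ} (hx1 : x ≠ 1) (hy1 : y ≠ 1)
    (h : (cycleGraph n).Adj x y) : y = x + 1 ∨ x = y + 1 := by
  obtain ⟨hx, hy, -, hxy | hyx⟩ := h
  · exact Or.inl (eq_succ_of_succ_mod_eq hx ⟨by grind, hy.2⟩ hxy)
  · exact Or.inr (eq_succ_of_succ_mod_eq hy ⟨by grind, hx.2⟩ hyx)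

lemma cycleGraph_adj_sub_one {a : ℕ} (ha : a ∈ Icc 2 n) : (cycleGraph n).Adj (a - 1) a := by
  obtain ⟨h2, hn⟩ := ha
  exact ⟨⟨by omega, by omega⟩, ⟨by omega, hn⟩, by omega,
    Or.inl (by rw [Nat.sub_add_cancel (by omega)])⟩

theorem compMins_eq {V : Set ℕ} (hV : V ⊆ Icc 1 n) (h1 : 1 ∉ V) :
    compMins n V = {a | a ∈ V ∧ a - 1 ∉ V} := by
  have hne1 : ∀ x ∈ V, x ≠ 1 := fun x hx hx1 => h1 (hx1 ▸ hx)
  ext a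
  constructor
  · rintro ⟨ha, hmin⟩
    refine ⟨ha, fun ha' => ?_⟩
    have ha2 : a ∈ Icc 2 n := ⟨by grind, (hV ha).2⟩
    have := hmin (a - 1) ha' (SimpleGraph.Adj.reachable (cycleGraph_adj_sub_one ha2).symm)
    grind
  · rintro ⟨ha, ha'⟩
    suffices ∀ y : V, Relation.ReflTransGen ((cycleGraph n).induce V).Adj ⟨a, ha⟩ y → a ≤ y from
      ⟨ha, fun b hb hab => this ⟨b, hb⟩ ((SimpleGraph.reachable_iff_reflTransGen _ _).1 hab)⟩
    intro y hy
    induction hy with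
    | refl => exact le_rfl
    | @tail x y _ hxy ih =>
      rcases cycleGraph_adj_of_ne_one (hne1 x x.2) (hne1 y y.2) hxy with h | h
      · omega
      · have : (x : ℕ) ≠ a := fun hxa => ha' (by rw [← hxa, h, Nat.add_sub_cancel]; exact y.2)
        omega

theorem mem_compMins_and_ne_sInf_iff {V : Set ℕ} (hV : V ⊆ Icc 1 n) (h1 : 1 ∉ V) {a : ℕ} :
    (a ∈ compMins n V ∧ a ≠ sInf (compMins n V)) ↔ a ∈ V ∧ a - 1 ∉ V ∧ ∃ x ∈ V, x < a := by
  rw [compMins_eq hV h1, sInf_setOf_sub_one_notMem fun h => by simpa using hV h]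
  simp only [mem_ofPred_eq, and_assoc]
  exact and_congr_right fun ha => and_congr_right fun _ => ne_sInf_iff_exists_lt ha

theorem mem_SpairSet_iff_of_one_mem {j : ℕ} {W : Set ℕ} {a : ℕ} (h1 : 1 ∈ W) :
    (W, a) ∈ SpairSet n j ↔ W ⊆ Icc 1 n ∧ W.ncard = j ∧
      a ∈ Icc 1 n \ W ∧ a - 1 ∉ Icc 1 n \ W ∧ ∃ x ∈ Icc 1 n \ W, x < a := by
  simp only [SpairSet, mSet, if_pos h1, mem_ofPred_eq,
    mem_compMins_and_ne_sInf_iff sdiff_subset (fun h => h.2 h1)]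

theorem mem_SpairSet_iff_of_one_notMem {j : ℕ} {W : Set ℕ} {a : ℕ} (h1 : 1 ∉ W) :
    (W, a) ∈ SpairSet n j ↔ W ⊆ Icc 1 n ∧ W.ncard = j ∧
      a ∈ W ∧ a - 1 ∉ W ∧ ∃ x ∈ W, x < a := by
  simp only [SpairSet, mSet, if_neg h1, mem_ofPred_eq]
  exact ⟨fun ⟨hW, hc, h⟩ => ⟨hW, hc, (mem_compMins_and_ne_sInf_iff hW h1).1 h⟩,
    fun ⟨hW, hc, h⟩ => ⟨hW, hc, (mem_compMins_and_ne_sInf_iff hW h1).2 h⟩⟩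

end CycleGraph

/-- `(R, a)` is the first row and the entry in box `(2,2)` of a standard Young tableau of shape
`(j, 2, 1^{n-j-2})`: the last two fields say that the entries above and to the left of `a`
are smaller than `a`. -/
structure IsTableauData (n j : ℕ) (R : Set ℕ) (a : ℕ) : Prop where
  subset_Icc : R ⊆ Icc 1 n
  ncard_eq : R.ncard = j
  one_mem : 1 ∈ R
  mem_Icc : a ∈ Icc 1 n
  notMem : a ∉ R
  exists_mem_lt : ∃ x ∈ R, 1 < x ∧ x < a
  exists_notMem_lt : ∃ x ∈ Icc 1 n \ R, x < a

def tableauData (n j : ℕ) : Set (Set ℕ × ℕ) := {d | IsTableauData n j d.1 d.2}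

section SpairBijection

/-- The map `T ↦ (W_T, a_T)` in terms of the first row `R` and `a = a_T`. -/
def toSpair (d : Set ℕ × ℕ) : Set ℕ × ℕ :=
  (if d.2 - 1 ∈ d.1 then d.1 else insert d.2 (d.1 \ {1}), d.2)

def ofSpair (d : Set ℕ × ℕ) : Set ℕ × ℕ :=
  (if 1 ∈ d.1 then d.1 else insert 1 (d.1 \ {d.2}), d.2)

variable {n j : ℕ}

lemma toSpair_mem_and_ofSpair_toSpair {R : Set ℕ} {a : ℕ} (hd : IsTableauData n j R a) :
    toSpair (R, a) ∈ SpairSet n j ∧ ofSpair (toSpair (R, a)) = (R, a) := by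
  obtain ⟨hR, hcard, h1, ha, haR, ⟨x, hxR, hx1, hxa⟩, hlt⟩ := hd
  simp only [toSpair]
  split_ifs with ha'
  · exact ⟨(mem_SpairSet_iff_of_one_mem h1).2 ⟨hR, hcard, ⟨ha, haR⟩, fun h => h.2 ha', hlt⟩,
      by simp [ofSpair, h1]⟩
  have ha1 : a ≠ 1 := fun h => haR (h ▸ h1)
  have h1W : 1 ∉ insert a (R \ {1}) := by simp [Ne.symm ha1]
  refine ⟨(mem_SpairSet_iff_of_one_notMem h1W).2 ⟨?_, ?_, mem_insert _ _, ?_, ?_⟩, ?_⟩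
  · exact insert_subset ha (sdiff_subset.trans hR)
  · rw [ncard_exchange haR h1, hcard]
  · have := ha.1
    rintro (h | ⟨h, -⟩)
    · omega
    · exact ha' h
  · exact ⟨x, mem_insert_of_mem _ ⟨hxR, hx1.ne'⟩, hxa⟩
  · simp only [ofSpair, if_neg h1W, insert_sdiff_self_of_notMem (fun h : a ∈ R \ {1} => haR h.1),
      insert_sdiff_singleton, insert_eq_of_mem h1]

lemma ofSpair_mem_and_toSpair_ofSpair {W : Set ℕ} {a : ℕ} (hd : (W, a) ∈ SpairSet n j) :
    ofSpair (W, a) ∈ tableauData n j ∧ toSpair (ofSpair (W, a)) = (W, a) := by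
  simp only [ofSpair]
  split_ifs with h1
  · obtain ⟨hW, hcard, ⟨ha, haW⟩, ha', x, ⟨hx, hxW⟩, hxa⟩ :=
      (mem_SpairSet_iff_of_one_mem h1).1 hd
    have hx2 : 2 ≤ x := lt_of_le_of_ne hx.1 fun h => hxW (h ▸ h1)
    have ha'W : a - 1 ∈ W := by
      by_contra h
      exact ha' ⟨⟨by omega, by have := ha.2; omega⟩, h⟩
    refine ⟨⟨hW, hcard, h1, ha, haW, ⟨a - 1, ha'W, by omega, by omega⟩, ⟨x, ⟨hx, hxW⟩, hxa⟩⟩,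
      by simp [toSpair, ha'W]⟩
  · obtain ⟨hW, hcard, haW, ha', x, hxW, hxa⟩ := (mem_SpairSet_iff_of_one_notMem h1).1 hd
    have hx2 : 2 ≤ x := lt_of_le_of_ne (hW hxW).1 fun h => h1 (h ▸ hxW)
    have han := (hW haW).2
    have ha'R : a - 1 ∉ insert 1 (W \ {a}) := by
      rintro (h | ⟨h, -⟩)
      · omega
      · exact ha' h
    have hR : IsTableauData n j (insert 1 (W \ {a})) a :=
      { subset_Icc := insert_subset ⟨le_rfl, by omega⟩ (sdiff_subset.trans hW)
        ncard_eq := by rw [ncard_exchange h1 haW, hcard]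
        one_mem := mem_insert _ _
        mem_Icc := hW haW
        notMem := by
          rintro (h | ⟨-, h⟩)
          · omega
          · exact h rfl
        exists_mem_lt := ⟨x, mem_insert_of_mem _ ⟨hxW, hxa.ne⟩, by omega, hxa⟩
        exists_notMem_lt := ⟨a - 1, ⟨⟨by omega, by omega⟩, ha'R⟩, by omega⟩ }
    refine ⟨hR, ?_⟩
    simp only [toSpair, if_neg ha'R, insert_sdiff_self_of_notMem (fun h : 1 ∈ W \ {a} => h1 h.1),
      insert_sdiff_singleton, insert_eq_of_mem haW]

theorem bijOn_toSpair : BijOn toSpair (tableauData n j) (SpairSet n j) :=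
  InvOn.bijOn
    ⟨fun _ hd => (toSpair_mem_and_ofSpair_toSpair hd).2,
      fun _ hd => (ofSpair_mem_and_toSpair_ofSpair hd).2⟩
    (fun _ hd => (toSpair_mem_and_ofSpair_toSpair hd).1)
    (fun _ hd => (ofSpair_mem_and_toSpair_ofSpair hd).1)

end SpairBijection

section Tableaux

def rowSet (j : ℕ) (T : ℕ × ℕ → ℕ) : Set ℕ := (fun c => T (0, c)) '' Iio j

/-- The entries of the first column, corner entry `1` included, of the tableau with first row `R`
and `a` in box `(2,2)`. -/
def colSet (n : ℕ) (R : Set ℕ) (a : ℕ) : Set ℕ := insert 1 (Icc 1 n \ insert a R)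

noncomputable def tableauOf (n j : ℕ) (R : Set ℕ) (a : ℕ) (p : ℕ × ℕ) : ℕ :=
  if p.1 = 0 ∧ p.2 < j then Nat.nth (· ∈ R) p.2
  else if p = (1, 1) then a
  else if p.2 = 0 ∧ p.1 < n - j then Nat.nth (· ∈ colSet n R a) p.1
  else 0

variable {n j : ℕ}

lemma cell_row {c : ℕ} (hc : c < j) : cell n j (0, c) := Or.inl ⟨rfl, hc⟩

lemma cell_one_one : cell n j (1, 1) := Or.inr (Or.inl ⟨rfl, one_lt_two⟩)

lemma cell_col {r : ℕ} (hj : 0 < j) (hr : r < n - j) : cell n j (r, 0) := by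
  unfold cell
  omega

lemma cell_cases (hjn : j + 2 ≤ n) {p : ℕ × ℕ} (hp : cell n j p) :
    (∃ c < j, p = (0, c)) ∨ p = (1, 1) ∨ ∃ r, 1 ≤ r ∧ r < n - j ∧ p = (r, 0) := by
  obtain ⟨r, c⟩ := p
  rcases hp with ⟨rfl, hc⟩ | ⟨rfl, hc⟩ | ⟨hr2, hr, rfl⟩
  · exact Or.inl ⟨c, hc, rfl⟩
  · interval_cases c
    · exact Or.inr (Or.inr ⟨1, le_rfl, by omega, rfl⟩)
    · exact Or.inr (Or.inl rfl)
  · exact Or.inr (Or.inr ⟨r, by omega, hr, rfl⟩)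

variable {R : Set ℕ} {a : ℕ}

lemma tableauOf_row {c : ℕ} (hc : c < j) : tableauOf n j R a (0, c) = Nat.nth (· ∈ R) c :=
  if_pos ⟨rfl, hc⟩

lemma tableauOf_one_one : tableauOf n j R a (1, 1) = a := by
  simp [tableauOf]

lemma tableauOf_col {r : ℕ} (hr1 : 1 ≤ r) (hr : r < n - j) :
    tableauOf n j R a (r, 0) = Nat.nth (· ∈ colSet n R a) r := by
  simp [tableauOf, Nat.one_le_iff_ne_zero.1 hr1, hr]

lemma tableauOf_of_not_cell (hj : 0 < j) {p : ℕ × ℕ} (hp : ¬cell n j p) :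
    tableauOf n j R a p = 0 := by
  obtain ⟨r, c⟩ := p
  simp only [cell, not_or] at hp
  simp only [tableauOf, Prod.mk.injEq]
  split_ifs <;> omega

end Tableaux

namespace IsTableauData

variable {n j : ℕ} {R : Set ℕ} {a : ℕ} (h : IsTableauData n j R a)
include h

lemma finite : R.Finite := (finite_Icc 1 n).subset h.subset_Icc

lemma colSet_subset_Icc : colSet n R a ⊆ Icc 1 n :=
  insert_subset ⟨le_rfl, h.mem_Icc.1.trans h.mem_Icc.2⟩ sdiff_subset

lemma colSet_finite : (colSet n R a).Finite := (finite_Icc 1 n).subset h.colSet_subset_Icc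

lemma pos : 0 < j := h.ncard_eq ▸ (ncard_pos h.finite).2 ⟨1, h.one_mem⟩

lemma add_two_le : j + 2 ≤ n := by
  obtain ⟨x, ⟨hx, hxR⟩, hxa⟩ := h.exists_notMem_lt
  have hle := ncard_le_ncard (insert_subset hx (insert_subset h.mem_Icc h.subset_Icc))
    (finite_Icc 1 n)
  rwa [ncard_insert_of_notMem (by simp [hxa.ne, hxR]) (h.finite.insert a),
    ncard_insert_of_notMem h.notMem h.finite, h.ncard_eq, ncard_Icc_nat, Nat.add_sub_cancel]
    at hle

lemma ncard_colSet : (colSet n R a).ncard = n - j := by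
  have hsub : insert a R ⊆ Icc 1 n := insert_subset h.mem_Icc h.subset_Icc
  rw [colSet, ncard_insert_of_notMem (fun h1 => h1.2 (mem_insert_of_mem _ h.one_mem)),
    ncard_sdiff hsub (h.finite.insert a), ncard_Icc_nat,
    ncard_insert_of_notMem h.notMem h.finite, h.ncard_eq]
  have := h.add_two_le
  omega

lemma nth_row_zero : Nat.nth (· ∈ R) 0 = 1 :=
  nth_zero_eq_one h.one_mem fun h0 => by simpa using (h.subset_Icc h0).1

lemma nth_col_zero : Nat.nth (· ∈ colSet n R a) 0 = 1 :=
  nth_zero_eq_one (mem_insert _ _) fun h0 => by simpa using (h.colSet_subset_Icc h0).1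

lemma nth_row_one_lt : Nat.nth (· ∈ R) 1 < a := by
  obtain ⟨x, hx, hx1, hxa⟩ := h.exists_mem_lt
  exact (nth_one_le hx (h.nth_row_zero ▸ hx1)).trans_lt hxa

lemma nth_col_one_lt : Nat.nth (· ∈ colSet n R a) 1 < a := by
  obtain ⟨x, ⟨hx, hxR⟩, hxa⟩ := h.exists_notMem_lt
  have hx1 : 1 < x := lt_of_le_of_ne hx.1 fun h1 => hxR (h1 ▸ h.one_mem)
  have hxC : x ∈ colSet n R a := mem_insert_of_mem _ ⟨hx, by simp [hxa.ne, hxR]⟩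
  exact (nth_one_le hxC (h.nth_col_zero ▸ hx1)).trans_lt hxa

lemma nth_row_mem {c : ℕ} (hc : c < j) : Nat.nth (· ∈ R) c ∈ R :=
  nth_mem_of_lt_ncard h.finite (h.ncard_eq ▸ hc)

lemma nth_row_lt_nth_row {c c' : ℕ} (hcc' : c < c') (hc' : c' < j) :
    Nat.nth (· ∈ R) c < Nat.nth (· ∈ R) c' :=
  nth_strictMonoOn_Iio_ncard h.finite (h.ncard_eq ▸ hcc'.trans hc') (h.ncard_eq ▸ hc') hcc'

lemma nth_col_lt_nth_col {r r' : ℕ} (hrr' : r < r') (hr' : r' < n - j) :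
    Nat.nth (· ∈ colSet n R a) r < Nat.nth (· ∈ colSet n R a) r' :=
  nth_strictMonoOn_Iio_ncard h.colSet_finite (h.ncard_colSet ▸ hrr'.trans hr')
    (h.ncard_colSet ▸ hr') hrr'

lemma nth_col_mem_sdiff {r : ℕ} (hr1 : 1 ≤ r) (hr : r < n - j) :
    Nat.nth (· ∈ colSet n R a) r ∈ Icc 1 n \ insert a R := by
  have hlt := h.nth_col_lt_nth_col hr1 hr
  rw [h.nth_col_zero] at hlt
  exact (nth_mem_of_lt_ncard h.colSet_finite (h.ncard_colSet ▸ hr)).resolve_left hlt.ne'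

lemma mapsTo_tableauOf : MapsTo (tableauOf n j R a) {p | cell n j p} (Icc 1 n) := by
  intro p hp
  rcases cell_cases h.add_two_le hp with ⟨c, hc, rfl⟩ | rfl | ⟨r, hr1, hr, rfl⟩
  · rw [tableauOf_row hc]
    exact h.subset_Icc (h.nth_row_mem hc)
  · rw [tableauOf_one_one]
    exact h.mem_Icc
  · rw [tableauOf_col hr1 hr]
    exact (h.nth_col_mem_sdiff hr1 hr).1

lemma injOn_tableauOf : InjOn (tableauOf n j R a) {p | cell n j p} := by
  intro p hp q hq hpq
  have row_ne_a : ∀ {c}, c < j → Nat.nth (· ∈ R) c ≠ a := fun hc he =>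
    h.notMem (he ▸ h.nth_row_mem hc)
  have row_ne_col : ∀ {c r}, c < j → 1 ≤ r → r < n - j →
      Nat.nth (· ∈ R) c ≠ Nat.nth (· ∈ colSet n R a) r := fun hc hr1 hr he =>
    (h.nth_col_mem_sdiff hr1 hr).2 (mem_insert_of_mem _ (he ▸ h.nth_row_mem hc))
  have a_ne_col : ∀ {r}, 1 ≤ r → r < n - j → a ≠ Nat.nth (· ∈ colSet n R a) r :=
    fun hr1 hr he => (h.nth_col_mem_sdiff hr1 hr).2 (he ▸ mem_insert _ _)
  rcases cell_cases h.add_two_le hp with ⟨c, hc, rfl⟩ | rfl | ⟨r, hr1, hr, rfl⟩ <;>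
    rcases cell_cases h.add_two_le hq with ⟨c', hc', rfl⟩ | rfl | ⟨r', hr1', hr', rfl⟩
  · rw [tableauOf_row hc, tableauOf_row hc'] at hpq
    rw [(nth_strictMonoOn_Iio_ncard h.finite).injOn (h.ncard_eq ▸ hc) (h.ncard_eq ▸ hc') hpq]
  · exact absurd (tableauOf_row hc ▸ hpq) (row_ne_a hc)
  · exact absurd (tableauOf_row hc ▸ tableauOf_col hr1' hr' ▸ hpq) (row_ne_col hc hr1' hr')
  · exact absurd (tableauOf_row hc' ▸ hpq).symm (row_ne_a hc')
  · rfl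
  · exact absurd (tableauOf_col hr1' hr' ▸ hpq) (a_ne_col hr1' hr')
  · exact absurd (tableauOf_row hc' ▸ tableauOf_col hr1 hr ▸ hpq).symm (row_ne_col hc' hr1 hr)
  · exact absurd (tableauOf_col hr1 hr ▸ hpq).symm (a_ne_col hr1 hr)
  · rw [tableauOf_col hr1 hr, tableauOf_col hr1' hr'] at hpq
    rw [(nth_strictMonoOn_Iio_ncard h.colSet_finite).injOn (h.ncard_colSet ▸ hr)
      (h.ncard_colSet ▸ hr') hpq]

lemma surjOn_tableauOf : SurjOn (tableauOf n j R a) {p | cell n j p} (Icc 1 n) := by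
  intro x hx
  by_cases hxR : x ∈ R
  · obtain ⟨c, hc, rfl⟩ := exists_lt_ncard_nth_eq h.finite hxR
    rw [h.ncard_eq] at hc
    exact ⟨(0, c), cell_row hc, tableauOf_row hc⟩
  by_cases hxa : x = a
  · exact ⟨(1, 1), cell_one_one, hxa ▸ tableauOf_one_one⟩
  have hxC : x ∈ colSet n R a := mem_insert_of_mem _ ⟨hx, by simp [hxa, hxR]⟩
  obtain ⟨r, hr, rfl⟩ := exists_lt_ncard_nth_eq h.colSet_finite hxC
  rw [h.ncard_colSet] at hr
  have hr1 : 1 ≤ r := Nat.one_le_iff_ne_zero.2 fun hr0 =>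
    hxR (by rw [hr0, h.nth_col_zero]; exact h.one_mem)
  exact ⟨(r, 0), cell_col h.pos hr, tableauOf_col hr1 hr⟩

lemma tableauOf_lt_of_fst_eq {p q : ℕ × ℕ} (hp : cell n j p) (hq : cell n j q)
    (h1 : p.1 = q.1) (h2 : p.2 < q.2) : tableauOf n j R a p < tableauOf n j R a q := by
  rcases cell_cases h.add_two_le hp with ⟨c, hc, rfl⟩ | rfl | ⟨r, hr1, hr, rfl⟩ <;>
    rcases cell_cases h.add_two_le hq with ⟨c', hc', rfl⟩ | rfl | ⟨r', hr1', hr', rfl⟩ <;>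
    dsimp only at h1 h2 <;> try omega
  · rw [tableauOf_row hc, tableauOf_row hc']
    exact h.nth_row_lt_nth_row h2 hc'
  · obtain rfl : r = 1 := h1
    rw [tableauOf_col le_rfl hr, tableauOf_one_one]
    exact h.nth_col_one_lt

lemma tableauOf_lt_of_snd_eq {p q : ℕ × ℕ} (hp : cell n j p) (hq : cell n j q)
    (h1 : p.2 = q.2) (h2 : p.1 < q.1) : tableauOf n j R a p < tableauOf n j R a q := by
  rcases cell_cases h.add_two_le hp with ⟨c, hc, rfl⟩ | rfl | ⟨r, hr1, hr, rfl⟩ <;>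
    rcases cell_cases h.add_two_le hq with ⟨c', hc', rfl⟩ | rfl | ⟨r', hr1', hr', rfl⟩ <;>
    dsimp only at h1 h2 <;> try omega
  · obtain rfl : c = 1 := h1
    rw [tableauOf_row hc, tableauOf_one_one]
    exact h.nth_row_one_lt
  · obtain rfl : c = 0 := h1
    rw [tableauOf_row hc, tableauOf_col hr1' hr', h.nth_row_zero, ← h.nth_col_zero]
    exact h.nth_col_lt_nth_col h2 hr'
  · rw [tableauOf_col hr1 hr, tableauOf_col hr1' hr']
    exact h.nth_col_lt_nth_col h2 hr'

theorem isSYT_tableauOf : IsSYT n j (tableauOf n j R a) :=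
  ⟨fun _ hp => tableauOf_of_not_cell h.pos hp,
    ⟨h.mapsTo_tableauOf, h.injOn_tableauOf, h.surjOn_tableauOf⟩,
    fun _ _ => h.tableauOf_lt_of_fst_eq, fun _ _ => h.tableauOf_lt_of_snd_eq⟩

lemma rowSet_tableauOf : rowSet j (tableauOf n j R a) = R := by
  have : rowSet j (tableauOf n j R a) = Nat.nth (· ∈ R) '' Iio j :=
    image_congr fun c hc => tableauOf_row hc
  rw [this, ← h.ncard_eq]
  exact image_nth_Iio_ncard h.finite

end IsTableauData

namespace IsSYT

variable {n j : ℕ} {T : ℕ × ℕ → ℕ} (hT : IsSYT n j T)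
include hT

lemma mem_Icc {p : ℕ × ℕ} (hp : cell n j p) : T p ∈ Icc 1 n := hT.2.1.mapsTo hp

lemma row_lt {c c' : ℕ} (hcc' : c < c') (hc' : c' < j) : T (0, c) < T (0, c') :=
  hT.2.2.1 _ _ (cell_row (hcc'.trans hc')) (cell_row hc') rfl hcc'

lemma col_lt (hj : 0 < j) {r r' : ℕ} (hrr' : r < r') (hr' : r' < n - j) :
    T (r, 0) < T (r', 0) :=
  hT.2.2.2 _ _ (cell_col hj (hrr'.trans hr')) (cell_col hj hr') rfl hrr'

lemma apply_zero_one_lt (hj : 2 ≤ j) : T (0, 1) < T (1, 1) :=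
  hT.2.2.2 _ _ (cell_row hj) cell_one_one rfl one_pos

lemma apply_one_zero_lt : T (1, 0) < T (1, 1) :=
  hT.2.2.1 _ _ (Or.inr (Or.inl ⟨rfl, two_pos⟩)) cell_one_one rfl one_pos

lemma apply_zero_zero (hj : 2 ≤ j) (hjn : j + 2 ≤ n) : T (0, 0) = 1 := by
  obtain ⟨p, hp, hp1⟩ := hT.2.1.surjOn (show 1 ∈ Icc 1 n from ⟨le_rfl, by omega⟩)
  have hle : T (0, 0) ≤ T p := by
    rcases cell_cases hjn hp with ⟨c, hc, rfl⟩ | rfl | ⟨r, hr1, hr, rfl⟩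
    · rcases Nat.eq_zero_or_pos c with rfl | hc0
      · exact le_rfl
      · exact (hT.row_lt hc0 hc).le
    · exact ((hT.row_lt one_pos hj).trans (hT.apply_zero_one_lt hj)).le
    · exact (hT.col_lt (by omega) hr1 hr).le
  have := (hT.mem_Icc (cell_row (show 0 < j by omega))).1
  omega

lemma notMem_rowSet {p : ℕ × ℕ} (hp : cell n j p) (hp0 : p.1 ≠ 0) : T p ∉ rowSet j T := by
  rintro ⟨c, hc, he⟩
  exact hp0 (congrArg Prod.fst (hT.2.1.injOn (cell_row hc) hp he)).symm

lemma isTableauData (hj : 2 ≤ j) (hjn : j + 2 ≤ n) : IsTableauData n j (rowSet j T) (T (1, 1)) where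
  subset_Icc := by
    rintro _ ⟨c, hc, rfl⟩
    exact hT.mem_Icc (cell_row hc)
  ncard_eq := by
    rw [rowSet, InjOn.ncard_image, ncard_Iio_nat]
    exact StrictMonoOn.injOn fun c _ c' hc' hcc' => hT.row_lt hcc' hc'
  one_mem := ⟨0, show 0 < j by omega, hT.apply_zero_zero hj hjn⟩
  mem_Icc := hT.mem_Icc cell_one_one
  notMem := hT.notMem_rowSet cell_one_one one_ne_zero
  exists_mem_lt := ⟨T (0, 1), ⟨1, hj, rfl⟩,
    (hT.apply_zero_zero hj hjn).symm.trans_lt (hT.row_lt one_pos hj), hT.apply_zero_one_lt hj⟩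
  exists_notMem_lt := by
    have h10 : cell n j (1, 0) := cell_col (by omega) (by omega)
    exact ⟨T (1, 0), ⟨hT.mem_Icc h10, hT.notMem_rowSet h10 one_ne_zero⟩, hT.apply_one_zero_lt⟩

lemma apply_row_eq_nth (hj : 2 ≤ j) (hjn : j + 2 ≤ n) {c : ℕ} (hc : c < j) :
    T (0, c) = Nat.nth (· ∈ rowSet j T) c := by
  have hR := hT.isTableauData hj hjn
  rw [← hR.ncard_eq] at hc
  refine eqOn_nth_of_strictMonoOn_of_mapsTo (f := fun c => T (0, c)) hR.finite
    (fun c _ c' hc' hcc' => hT.row_lt hcc' (hR.ncard_eq ▸ hc')) (fun c hc => ?_) hc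
  exact ⟨c, hR.ncard_eq ▸ hc, rfl⟩

lemma apply_col_eq_nth (hj : 2 ≤ j) (hjn : j + 2 ≤ n) {r : ℕ} (hr : r < n - j) :
    T (r, 0) = Nat.nth (· ∈ colSet n (rowSet j T) (T (1, 1))) r := by
  have hR := hT.isTableauData hj hjn
  rw [← hR.ncard_colSet] at hr
  refine eqOn_nth_of_strictMonoOn_of_mapsTo (f := fun r => T (r, 0)) hR.colSet_finite
    (fun r _ r' hr' hrr' => hT.col_lt (by omega) hrr' (hR.ncard_colSet ▸ hr')) (fun r hr => ?_) hr
  rw [hR.ncard_colSet] at hr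
  rcases Nat.eq_zero_or_pos r with rfl | hr0
  · show T (0, 0) ∈ _
    rw [hT.apply_zero_zero hj hjn]
    exact mem_insert _ _
  have hcell : cell n j (r, 0) := cell_col (by omega) hr
  refine mem_insert_of_mem _ ⟨hT.mem_Icc hcell, ?_⟩
  rintro (he | he)
  · exact zero_ne_one (congrArg Prod.snd (hT.2.1.injOn hcell cell_one_one he))
  · exact hT.notMem_rowSet hcell hr0.ne' he

lemma tableauOf_eq (hj : 2 ≤ j) (hjn : j + 2 ≤ n) :
    tableauOf n j (rowSet j T) (T (1, 1)) = T := by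
  funext p
  by_cases hp : cell n j p
  · rcases cell_cases hjn hp with ⟨c, hc, rfl⟩ | rfl | ⟨r, hr1, hr, rfl⟩
    · rw [tableauOf_row hc, hT.apply_row_eq_nth hj hjn hc]
    · rw [tableauOf_one_one]
    · rw [tableauOf_col hr1 hr, hT.apply_col_eq_nth hj hjn hr]
  · rw [tableauOf_of_not_cell (by omega) hp, hT.1 p hp]

end IsSYT

theorem bijOn_rowSet_apply_one_one {n j : ℕ} (hj : 2 ≤ j) (hjn : j + 2 ≤ n) :
    BijOn (fun T => (rowSet j T, T (1, 1))) {T | IsSYT n j T} (tableauData n j) :=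
  InvOn.bijOn (f' := fun d => tableauOf n j d.1 d.2)
    ⟨fun _ hT => IsSYT.tableauOf_eq hT hj hjn,
      fun d hd => Prod.ext (IsTableauData.rowSet_tableauOf hd)
        (tableauOf_one_one (n := n) (j := j) (R := d.1))⟩
    (fun _ hT => IsSYT.isTableauData hT hj hjn)
    (fun _ hd => IsTableauData.isSYT_tableauOf hd)

theorem stmt_1_general (n j : ℕ) (hj1 : 2 ≤ j) (hj2 : j ≤ n - 2) :
    Nat.card {T : ℕ × ℕ → ℕ // IsSYT n j T} = Nat.card (SpairSet n j) :=
  calc Nat.card {T : ℕ × ℕ → ℕ // IsSYT n j T}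
      = {T : ℕ × ℕ → ℕ | IsSYT n j T}.ncard := Nat.card_coe_set_eq _
    _ = (tableauData n j).ncard := (bijOn_rowSet_apply_one_one hj1 (by omega)).ncard_eq
    _ = (SpairSet n j).ncard := bijOn_toSpair.ncard_eq
    _ = Nat.card (SpairSet n j) := (Nat.card_coe_set_eq _).symm

/-- the number of SYT of shape `(j,2,1^{n-j-2})` equals the number of
pairs `(W,a)` with `W` a `j`-subset of `{1,...,n}` and `a` a non-minimal element of `m(W)`. -/
theorem stmt_1 (n j : ℕ) (hn : 4 ≤ n) (hj1 : 2 ≤ j) (hj2 : j ≤ n - 2) :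
    Nat.card {T : ℕ × ℕ → ℕ // IsSYT n j T} = Nat.card (SpairSet n j) :=
  stmt_1_general n j hj1 hj2
end

section
/- Let n ≥ 4 and 2 ≤ j ≤ n−2, and let T be a standard Young tableau of shape (j, 2, 1^{n−j−2}). Let a = T(2,2) and let B be the box containing a−1. If B lies in the first column of T, then with W_T := {T(2,2)} ∪ {T(1,i) : 2 ≤ i ≤ j}, we have 1 ∉ W_T, a ∈ W_T, and a is a non-minimal element of the set of minima of the connected components of C_n[W_T]. -/
open scoped Classical

/-!
Every entry of `W` other than `a = T(2,2)` lies in the first row, while `a - 1` lies in the first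
column, so `a - 1 ∉ W`; also every entry of `W` exceeds `T(1,1) ≥ 1`, so `1 ∉ W`. Hence no edge of
`C_n` leaves `{x ∈ W | a ≤ x}` inside `W`: going down from `a` hits `a - 1`, and the wrap-around edge
`n — 1` hits `1`. So `a` is the minimum of its component. The entry `T(1,2) < a` is the least element
of `W`, hence a smaller component minimum.
-/

lemma succ_mod_eq_mod_cases {n i k : ℕ} (hin : i ≤ n) (hk : k ∈ Set.Icc 1 n)
    (h : (i + 1) % n = k % n) : k = i + 1 ∨ (i = n ∧ k = 1) := by
  obtain ⟨hk1, hkn⟩ := hk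
  rcases hkn.lt_or_eq with hkn | rfl
  · rw [Nat.mod_eq_of_lt hkn] at h
    rcases hin.lt_or_eq with hin | rfl
    · rcases (show i + 1 ≤ n from hin).lt_or_eq with hlt | heq
      · rw [Nat.mod_eq_of_lt hlt] at h
        exact Or.inl h.symm
      · rw [heq, Nat.mod_self] at h
        omega
    · rw [Nat.add_mod_left] at h
      have := Nat.mod_le 1 i
      omega
  · rw [Nat.mod_self] at h
    have hdvd := Nat.dvd_of_mod_eq_zero h
    rcases hin.lt_or_eq with hin | rfl
    · have := Nat.le_of_dvd i.succ_pos hdvd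
      omega
    · have := (Nat.dvd_add_right (dvd_refl i)).1 hdvd
      exact Or.inr ⟨rfl, Nat.dvd_one.1 this⟩

lemma cycleGraph_adj_cases {n x y : ℕ} (h : (cycleGraph n).Adj x y) :
    y = x + 1 ∨ x = y + 1 ∨ (x = n ∧ y = 1) ∨ (x = 1 ∧ y = n) := by
  obtain ⟨hx, hy, -, hxy | hyx⟩ := h
  · rcases succ_mod_eq_mod_cases hx.2 hy hxy with h | h
    · exact Or.inl h
    · exact Or.inr (Or.inr (Or.inl h))
  · rcases succ_mod_eq_mod_cases hy.2 hx hyx with h | ⟨rfl, rfl⟩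
    · exact Or.inr (Or.inl h)
    · exact Or.inr (Or.inr (Or.inr ⟨rfl, rfl⟩))

lemma SimpleGraph.Reachable.of_adj_closed {V : Type*} {G : SimpleGraph V} {P : V → Prop}
    (hP : ∀ u v, G.Adj u v → P u → P v) {u v : V} (huv : G.Reachable u v) (hu : P u) : P v := by
  rw [SimpleGraph.reachable_iff_reflTransGen] at huv
  induction huv with
  | refl => exact hu
  | tail _ hadj ih => exact hP _ _ hadj ih

lemma mem_compMins_of_adj_closed {n a : ℕ} {W : Set ℕ} (ha : a ∈ W)
    (hclosed : ∀ x ∈ W, ∀ y ∈ W, (cycleGraph n).Adj x y → a ≤ x → a ≤ y) :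
    a ∈ compMins n W :=
  ⟨ha, fun _ _ hreach =>
    hreach.of_adj_closed (P := fun v : W => a ≤ v) (fun u v huv => hclosed u u.2 v v.2 huv) le_rfl⟩

lemma mem_compMins_of_isLeast {n m : ℕ} {W : Set ℕ} (hm : IsLeast W m) : m ∈ compMins n W :=
  ⟨hm.1, fun _ hb _ => hm.2 hb⟩

lemma le_of_cycleGraph_adj_of_not_mem {n a : ℕ} {W : Set ℕ} (h1 : 1 ∉ W) (ha : a - 1 ∉ W)
    {x y : ℕ} (hy : y ∈ W) (hxy : (cycleGraph n).Adj x y) (hax : a ≤ x) : a ≤ y := by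
  rcases cycleGraph_adj_cases hxy with rfl | rfl | ⟨-, rfl⟩ | ⟨rfl, rfl⟩
  · omega
  · by_contra hlt
    exact ha (by rwa [show a - 1 = y by omega])
  · exact absurd hy h1
  · exact hax.trans hxy.2.1.1

namespace IsSYT

variable {n j : ℕ} {T : ℕ × ℕ → ℕ}

lemma cell_of_ne_zero (hT : IsSYT n j T) {p : ℕ × ℕ} (hp : T p ≠ 0) : cell n j p :=
  not_not.1 (mt (hT.1 p) hp)

lemma one_le (hT : IsSYT n j T) {p : ℕ × ℕ} (hp : cell n j p) : 1 ≤ T p :=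
  (hT.2.1.mapsTo hp).1

lemma zero_one_le_of_mem (hT : IsSYT n j T) (hj : 2 ≤ j) {x : ℕ}
    (hx : x ∈ {T (1, 1)} ∪ T '' {p : ℕ × ℕ | p.1 = 0 ∧ 1 ≤ p.2 ∧ p.2 < j}) : T (0, 1) ≤ x := by
  rcases hx with rfl | ⟨⟨_, c⟩, ⟨rfl, hc1, hcj⟩, rfl⟩
  · exact (hT.2.2.2 (0, 1) (1, 1) (Or.inl ⟨rfl, by omega⟩) (Or.inr (Or.inl ⟨rfl, by omega⟩))
      rfl one_pos).le
  · rcases hc1.lt_or_eq with hc1 | rfl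
    · exact (hT.2.2.1 (0, 1) (0, c) (Or.inl ⟨rfl, by omega⟩) (Or.inl ⟨rfl, hcj⟩) rfl hc1).le
    · exact le_rfl

lemma isLeast_zero_one (hT : IsSYT n j T) (hj : 2 ≤ j) :
    IsLeast ({T (1, 1)} ∪ T '' {p : ℕ × ℕ | p.1 = 0 ∧ 1 ≤ p.2 ∧ p.2 < j}) (T (0, 1)) :=
  ⟨Or.inr ⟨(0, 1), ⟨rfl, le_rfl, hj⟩, rfl⟩, fun _ hx => hT.zero_one_le_of_mem hj hx⟩

lemma one_lt_zero_one (hT : IsSYT n j T) (hj : 2 ≤ j) : 1 < T (0, 1) :=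
  (hT.one_le (Or.inl ⟨rfl, by omega⟩)).trans_lt
    (hT.2.2.1 (0, 0) (0, 1) (Or.inl ⟨rfl, by omega⟩) (Or.inl ⟨rfl, hj⟩) rfl one_pos)

lemma zero_one_lt_one_one (hT : IsSYT n j T) (hj : 2 ≤ j) : T (0, 1) < T (1, 1) :=
  hT.2.2.2 (0, 1) (1, 1) (Or.inl ⟨rfl, hj⟩) (Or.inr (Or.inl ⟨rfl, by omega⟩)) rfl one_pos

lemma sub_one_not_mem_of_eq_first_column (hT : IsSYT n j T) {r : ℕ}
    (hr : T (r, 0) = T (1, 1) - 1) :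
    T (1, 1) - 1 ∉ {T (1, 1)} ∪ T '' {p : ℕ × ℕ | p.1 = 0 ∧ 1 ≤ p.2 ∧ p.2 < j} := by
  have ha : 1 ≤ T (1, 1) := hT.one_le (Or.inr (Or.inl ⟨rfl, by omega⟩))
  rintro (h | ⟨⟨_, c⟩, ⟨rfl, hc1, hcj⟩, hc⟩)
  · have := Set.mem_singleton_iff.1 h
    omega
  · have hcell : cell n j (0, c) := Or.inl ⟨rfl, hcj⟩
    have hrcell : cell n j (r, 0) := hT.cell_of_ne_zero (by have := hT.one_le hcell; omega)
    have := hT.2.1.injOn hcell hrcell (hc.trans hr.symm)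
    simp only [Prod.mk.injEq] at this
    omega

end IsSYT

theorem stmt_5_general (n j : ℕ) (hj1 : 2 ≤ j)
    (T : ℕ × ℕ → ℕ) (hT : IsSYT n j T)
    (hcol : ∃ r < n - j, T (r, 0) = T (1, 1) - 1)
    (W : Set ℕ)
    (hWdef : W = {T (1, 1)} ∪ T '' {p : ℕ × ℕ | p.1 = 0 ∧ 1 ≤ p.2 ∧ p.2 < j}) :
    1 ∉ W ∧ T (1, 1) ∈ W ∧
    T (1, 1) ∈ compMins n W ∧ T (1, 1) ≠ sInf (compMins n W) := by
  obtain ⟨r, -, hr⟩ := hcol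
  have hleast : IsLeast W (T (0, 1)) := hWdef ▸ hT.isLeast_zero_one hj1
  have hpred : T (1, 1) - 1 ∉ W := hWdef ▸ hT.sub_one_not_mem_of_eq_first_column hr
  have haW : T (1, 1) ∈ W := hWdef ▸ Or.inl rfl
  have h1 : 1 ∉ W := fun h => (hleast.2 h).not_gt (hT.one_lt_zero_one hj1)
  refine ⟨h1, haW, mem_compMins_of_adj_closed haW fun _ _ _ hy =>
    le_of_cycleGraph_adj_of_not_mem h1 hpred hy, ?_⟩
  exact ((Nat.sInf_le (mem_compMins_of_isLeast hleast)).trans_lt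
    (hT.zero_one_lt_one_one hj1)).ne'

/-- if the box containing `a_T - 1` lies in the first column, then with
`W_T = {T(2,2)} ∪ {T(1,i) : 2 ≤ i ≤ j}` we have `1 ∉ W_T`, `a_T ∈ W_T`, and `a_T`
is a non-minimal component minimum of `C_n[W_T]`. -/
theorem stmt_5 (n j : ℕ) (hn : 4 ≤ n) (hj1 : 2 ≤ j) (hj2 : j ≤ n - 2)
    (T : ℕ × ℕ → ℕ) (hT : IsSYT n j T)
    (hcol : ∃ r < n - j, T (r, 0) = T (1, 1) - 1)
    (W : Set ℕ)
    (hWdef : W = {T (1, 1)} ∪ T '' {p : ℕ × ℕ | p.1 = 0 ∧ 1 ≤ p.2 ∧ p.2 < j}) :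
    1 ∉ W ∧ T (1, 1) ∈ W ∧
    T (1, 1) ∈ compMins n W ∧ T (1, 1) ≠ sInf (compMins n W) :=
  stmt_5_general n j hj1 T hT hcol W hWdef
end

section
/- Let n ≥ 4 and let W be a proper nonempty subset of {1,...,n} with 1 ∈ W, and suppose the second-smallest element b of W satisfies b > 2. Then {2, 3, ..., b−1} is the vertex set of a connected component of C_n restricted to the complement of W, and min(m(W)) = 2, where m(W) is the set of minima of connected components of C_n[complement of W]. -/
open scoped Classical

/-
The vertices `2, …, b - 1` avoid `W` and consecutive ones are adjacent, so they lie in the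
component of `2`. Conversely `1` and `b` lie in `W`, and an interior vertex `x` of the cycle
(`1 < x < n`) has only the neighbours `x ± 1`, so no edge of `C_n[complement of W]` leaves
`{2, …, b - 1}`. Since `1 ∈ W`, every vertex of the complement is at least `2`.
-/

open Set

lemma cycleGraph_adj_succ {n i : ℕ} (hi : 1 ≤ i) (hin : i < n) :
    (cycleGraph n).Adj i (i + 1) :=
  ⟨⟨hi, hin.le⟩, ⟨by omega, hin⟩, by omega, Or.inl rfl⟩

lemma mod_eq_self_or_eq_of_le {n a : ℕ} (ha : a ≤ n) : a % n = a ∨ (a = n ∧ a % n = 0) := by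
  rcases ha.lt_or_eq with ha | rfl
  · exact Or.inl (Nat.mod_eq_of_lt ha)
  · exact Or.inr ⟨rfl, Nat.mod_self a⟩

lemma cycleGraph_adj_eq_pred_or_succ {n x y : ℕ} (hx : 1 < x) (hxn : x < n)
    (h : (cycleGraph n).Adj x y) : y + 1 = x ∨ x + 1 = y := by
  obtain ⟨-, ⟨hy, hyn⟩, -, hxy | hyx⟩ := h
  · rcases mod_eq_self_or_eq_of_le (show x + 1 ≤ n by omega) with h | h <;>
    rcases mod_eq_self_or_eq_of_le hyn with h' | h' <;> omega
  · rw [Nat.mod_eq_of_lt hxn] at hyx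
    rcases hyn.lt_or_eq with hyn | rfl
    · rcases mod_eq_self_or_eq_of_le (show y + 1 ≤ n by omega) with h | h <;> omega
    · rw [Nat.add_mod_left, Nat.mod_eq_of_lt (by omega)] at hyx
      omega

namespace SimpleGraph

lemma mem_of_induce_reachable {α : Type*} {G : SimpleGraph α} {V S : Set α}
    (hS : ∀ x y, x ∈ S → y ∈ V → G.Adj x y → y ∈ S) {u v : V}
    (h : (G.induce V).Reachable u v) (hu : (u : α) ∈ S) : (v : α) ∈ S := by
  obtain ⟨p⟩ := h
  induction p with
  | nil => exact hu
  | cons hadj _ ih => exact ih (hS _ _ hu (Subtype.mem _) hadj)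

lemma induce_reachable_of_Icc {G : SimpleGraph ℕ} {V : Set ℕ} {a c : ℕ} (hV : Icc a c ⊆ V)
    (hadj : ∀ i, a ≤ i → i < c → G.Adj i (i + 1)) {x : ℕ} (hx : x ∈ Icc a c) :
    (G.induce V).Reachable ⟨a, hV (left_mem_Icc.2 (hx.1.trans hx.2))⟩ ⟨x, hV hx⟩ := by
  obtain ⟨hax, hxc⟩ := hx
  induction x, hax using Nat.le_induction with
  | base => rfl
  | succ x hax ih =>
    exact (ih (by omega)).trans (Adj.reachable (hadj x hax (by omega)))

end SimpleGraph

lemma Icc_two_pred_sInf_subset {n : ℕ} {W : Set ℕ} (hW : W ⊆ Icc 1 n)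
    (hne : (W \ {1}).Nonempty) : Icc 2 (sInf (W \ {1}) - 1) ⊆ Icc 1 n \ W := by
  rintro x ⟨hx2, hxb⟩
  have hbn : sInf (W \ {1}) ≤ n := (hW (Nat.sInf_mem hne).1).2
  refine ⟨⟨by omega, by omega⟩, fun hxW => ?_⟩
  have := Nat.sInf_le (show x ∈ W \ {1} from ⟨hxW, mem_singleton_iff.not.2 (by omega)⟩)
  omega

theorem stmt_6_general (n : ℕ) (W : Set ℕ) (hW : W ⊆ Set.Icc 1 n)
    (h1 : 1 ∈ W) (hne : (W \ {1}).Nonempty)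
    (b : ℕ) (hb : b = sInf (W \ {1})) (hb2 : 2 < b) :
    (∃ h2 : (2 : ℕ) ∈ Set.Icc 1 n \ W,
      ∀ x, ∀ hx : x ∈ Set.Icc 1 n \ W,
        (((cycleGraph n).induce (Set.Icc 1 n \ W)).Reachable ⟨2, h2⟩ ⟨x, hx⟩ ↔
          x ∈ Set.Icc 2 (b - 1))) ∧
    sInf (compMins n (Set.Icc 1 n \ W)) = 2 := by
  have hbW : b ∈ W \ {1} := hb ▸ Nat.sInf_mem hne
  have hbn : b ≤ n := (hW hbW.1).2
  have hsub : Icc 2 (b - 1) ⊆ Icc 1 n \ W := hb ▸ Icc_two_pred_sInf_subset hW hne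
  have h2I : 2 ∈ Icc 2 (b - 1) := ⟨le_rfl, by omega⟩
  have h2 : 2 ∈ Icc 1 n \ W := hsub h2I
  have hclosed : ∀ x y, x ∈ Icc 2 (b - 1) → y ∈ Icc 1 n \ W → (cycleGraph n).Adj x y →
      y ∈ Icc 2 (b - 1) := by
    rintro x y ⟨hx2, hxb⟩ ⟨-, hyW⟩ hxy
    have hy1 : y ≠ 1 := by rintro rfl; exact hyW h1
    have hyb : y ≠ b := by rintro rfl; exact hyW hbW.1
    rcases cycleGraph_adj_eq_pred_or_succ (by omega) (by omega) hxy with h | h <;>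
      constructor <;> omega
  have hcomp : ∀ x, ∀ hx : x ∈ Icc 1 n \ W,
      (((cycleGraph n).induce (Icc 1 n \ W)).Reachable ⟨2, h2⟩ ⟨x, hx⟩ ↔ x ∈ Icc 2 (b - 1)) :=
    fun _ _ => ⟨fun h => SimpleGraph.mem_of_induce_reachable hclosed h h2I,
      SimpleGraph.induce_reachable_of_Icc hsub fun _ _ _ => cycleGraph_adj_succ (by omega) (by omega)⟩
  refine ⟨⟨h2, hcomp⟩, IsLeast.csInf_eq ⟨⟨h2, fun y hy hr => ((hcomp y hy).1 hr).1⟩, ?_⟩⟩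
  rintro a ⟨⟨⟨ha1, -⟩, haW⟩, -⟩
  have : a ≠ 1 := by rintro rfl; exact haW h1
  omega

/-- if `1 ∈ W` and the second-smallest element `b` of `W` satisfies
`b > 2`, then `{2,...,b-1}` is the vertex set of a connected component of
`C_n[complement of W]`, and `min(m(W)) = 2`. -/
theorem stmt_6 (n : ℕ) (hn : 4 ≤ n) (W : Set ℕ) (hW : W ⊆ Set.Icc 1 n)
    (hpr : W ≠ Set.Icc 1 n) (h1 : 1 ∈ W) (hne : (W \ {1}).Nonempty)
    (b : ℕ) (hb : b = sInf (W \ {1})) (hb2 : 2 < b) :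
    (∃ h2 : (2 : ℕ) ∈ Set.Icc 1 n \ W,
      ∀ x, ∀ hx : x ∈ Set.Icc 1 n \ W,
        (((cycleGraph n).induce (Set.Icc 1 n \ W)).Reachable ⟨2, h2⟩ ⟨x, hx⟩ ↔
          x ∈ Set.Icc 2 (b - 1))) ∧
    sInf (compMins n (Set.Icc 1 n \ W)) = 2 :=
  stmt_6_general n W hW h1 hne b hb hb2
end

section
/- For n ≥ 4 and 2 ≤ j ≤ n−2, the map (W, a) ↦ (complement of W, a) is a bijection from the set S(j,n) of pairs (W, a) with W a j-element subset of {1,...,n} and a a non-minimal element of m(W), to the analogous set S(n−j, n). -/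
open scoped Classical

/-
Complementation inside `{1,...,n}` is an involution that leaves `m(W)` unchanged, since `m` is
defined through whichever of `W` and its complement avoids `1`; it also sends `j`-subsets to
`(n - j)`-subsets.
-/

lemma mSet_Icc_diff {n : ℕ} {W : Set ℕ} (hW : W ⊆ Set.Icc 1 n) :
    mSet n (Set.Icc 1 n \ W) = mSet n W := by
  by_cases h1n : 1 ≤ n
  swap
  · have hIcc : Set.Icc 1 n = ∅ := Set.Icc_eq_empty h1n
    have hW0 : W = ∅ := Set.subset_empty_iff.mp (hIcc ▸ hW)
    rw [hIcc, hW0, Set.empty_sdiff]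
  unfold mSet
  by_cases h1W : 1 ∈ W
  · rw [if_pos h1W, if_neg fun h => h.2 h1W]
  · rw [if_pos ⟨⟨le_rfl, h1n⟩, h1W⟩, if_neg h1W, Set.sdiff_sdiff_cancel_left hW]

lemma mapsTo_Icc_diff_SpairSet (n k : ℕ) :
    Set.MapsTo (fun p : Set ℕ × ℕ => (Set.Icc 1 n \ p.1, p.2))
      (SpairSet n k) (SpairSet n (n - k)) := by
  rintro ⟨W, a⟩ ⟨hW, hcard, ha, ha_min⟩
  have hncard : (Set.Icc 1 n \ W).ncard = n - k := by
    rw [Set.ncard_sdiff hW ((Set.finite_Icc 1 n).subset hW), hcard, Set.ncard_eq_toFinset_card',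
      Set.toFinset_Icc, Nat.card_Icc, Nat.add_sub_cancel]
  rw [← mSet_Icc_diff hW] at ha ha_min
  exact ⟨Set.sdiff_subset, hncard, ha, ha_min⟩

lemma invOn_Icc_diff_SpairSet (n j k : ℕ) :
    Set.InvOn (fun p : Set ℕ × ℕ => (Set.Icc 1 n \ p.1, p.2))
      (fun p : Set ℕ × ℕ => (Set.Icc 1 n \ p.1, p.2)) (SpairSet n j) (SpairSet n k) :=
  ⟨fun _ hp => Prod.ext (Set.sdiff_sdiff_cancel_left hp.1) rfl,
    fun _ hp => Prod.ext (Set.sdiff_sdiff_cancel_left hp.1) rfl⟩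

theorem stmt_9_general (n j : ℕ) (hj2 : j ≤ n - 2) :
    Set.BijOn (fun p : Set ℕ × ℕ => (Set.Icc 1 n \ p.1, p.2))
      (SpairSet n j) (SpairSet n (n - j)) := by
  have hjn : j ≤ n := by omega
  have hback := mapsTo_Icc_diff_SpairSet n (n - j)
  rw [Nat.sub_sub_self hjn] at hback
  exact (invOn_Icc_diff_SpairSet n j (n - j)).bijOn (mapsTo_Icc_diff_SpairSet n j) hback

/-- `(W, a) ↦ (complement of W, a)` is a bijection from `S(j,n)` to
`S(n-j,n)`. -/
theorem stmt_9 (n j : ℕ) (hn : 4 ≤ n) (hj1 : 2 ≤ j) (hj2 : j ≤ n - 2) :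
    Set.BijOn (fun p : Set ℕ × ℕ => (Set.Icc 1 n \ p.1, p.2))
      (SpairSet n j) (SpairSet n (n - j)) :=
  stmt_9_general n j hj2
end

section
/- For n ≥ 4 and 2 ≤ j ≤ n−2, and any standard Young tableau T of shape (j, 2, 1^{n−j−2}), the bijection φ of the paper satisfies φ(T*) = (complement of W_T, a_T), where T* is the transpose of T; i.e., W_{T*} equals the complement of W_T and a_{T*} = a_T. -/
open scoped Classical

/-! The cells of the shape are the first row, the first column and the box `(2,2)`, and
transposition swaps the first row and the first column. The entry `a_T - 1` sits in exactly one
of them: it is not `T(1,1)`, since `T(1,1) < T(2,1) < a_T`. So the two cases in the definition of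
`W` are swapped by transposition, and in each case `W_{T*}` is the image under `T` of the cells
that do not contribute to `W_T`. -/

open Set

lemma WT_comp_swap (m : ℕ) (T : ℕ × ℕ → ℕ) :
    WT m (T ∘ Prod.swap) =
      if ∃ r < m, T (r, 0) = T (1, 1) - 1 then T '' {p | p.2 = 0 ∧ p.1 < m}
      else {T (1, 1)} ∪ T '' {p | p.2 = 0 ∧ 1 ≤ p.1 ∧ p.1 < m} := by
  rw [WT, image_comp, image_comp, image_swap_eq_preimage_swap]
  rfl

section Tableau

variable {n j : ℕ} {T : ℕ × ℕ → ℕ}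

lemma cell_iff (hj : 0 < j) (hnj : 2 ≤ n - j) {p : ℕ × ℕ} :
    cell n j p ↔
      (p.1 = 0 ∧ p.2 < j) ∨ p = (1, 1) ∨ (p.2 = 0 ∧ 1 ≤ p.1 ∧ p.1 < n - j) := by
  obtain ⟨r, c⟩ := p
  simp only [cell, Prod.mk.injEq]
  omega

lemma cell_of_firstCol (hj : 0 < j) {r : ℕ} (hr : r < n - j) :
    cell n j (r, 0) := by
  unfold cell
  omega

lemma setOf_cell_sdiff_firstRow (hj : 0 < j) (hnj : 2 ≤ n - j) :
    {p | cell n j p} \ {p | p.1 = 0 ∧ p.2 < j} =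
      {(1, 1)} ∪ {p | p.2 = 0 ∧ 1 ≤ p.1 ∧ p.1 < n - j} := by
  ext p
  simp only [mem_sdiff, mem_ofPred_eq, mem_union, mem_singleton_iff, cell_iff hj hnj]
  obtain ⟨r, c⟩ := p
  simp only [Prod.mk.injEq]
  omega

lemma setOf_cell_sdiff_union_firstRowTail (hj : 0 < j) (hnj : 2 ≤ n - j) :
    {p | cell n j p} \ ({(1, 1)} ∪ {p | p.1 = 0 ∧ 1 ≤ p.2 ∧ p.2 < j}) =
      {p | p.2 = 0 ∧ p.1 < n - j} := by
  ext p
  simp only [mem_sdiff, mem_ofPred_eq, mem_union, mem_singleton_iff, cell_iff hj hnj]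
  obtain ⟨r, c⟩ := p
  simp only [Prod.mk.injEq]
  omega

lemma IsSYT.Icc_sdiff_image (hT : IsSYT n j T) {A : Set (ℕ × ℕ)}
    (hA : A ⊆ {p | cell n j p}) :
    Icc 1 n \ T '' A = T '' ({p | cell n j p} \ A) := by
  rw [hT.2.1.injOn.image_sdiff_subset hA, hT.2.1.image_eq]

lemma IsSYT.exists_firstRow_iff_not_exists_firstCol (hT : IsSYT n j T) (hj : 0 < j)
    (hnj : 2 ≤ n - j) :
    (∃ c < j, T (0, c) = T (1, 1) - 1) ↔ ¬ ∃ r < n - j, T (r, 0) = T (1, 1) - 1 := by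
  obtain ⟨-, hbij, hrow, hcol⟩ := hT
  have c00 : cell n j (0, 0) := (cell_iff hj hnj).2 (Or.inl ⟨rfl, hj⟩)
  have c10 : cell n j (1, 0) := (cell_iff hj hnj).2 (Or.inr (Or.inr ⟨rfl, le_rfl, hnj⟩))
  have c11 : cell n j (1, 1) := (cell_iff hj hnj).2 (Or.inr (Or.inl rfl))
  have h00 : T (0, 0) < T (1, 0) := hcol _ _ c00 c10 rfl Nat.zero_lt_one
  have h10 : T (1, 0) < T (1, 1) := hrow _ _ c10 c11 rfl Nat.zero_lt_one
  have hpos : 1 ≤ T (0, 0) := (hbij.mapsTo c00).1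
  constructor
  · rintro ⟨c, hc, hTc⟩ ⟨r, hr, hTr⟩
    have hcell : ((0 : ℕ), c) = (r, (0 : ℕ)) :=
      hbij.injOn ((cell_iff hj hnj).2 (Or.inl ⟨rfl, hc⟩))
        (cell_of_firstCol hj hr) (hTc.trans hTr.symm)
    obtain rfl : c = 0 := congrArg Prod.snd hcell
    omega
  · intro hnot
    have hpred : T (1, 1) - 1 ∈ Icc 1 n := ⟨by omega, by have := (hbij.mapsTo c11).2; omega⟩
    obtain ⟨⟨r, c⟩, hp, hTp⟩ := hbij.surjOn hpred
    rcases (cell_iff hj hnj).1 hp with ⟨rfl, hc⟩ | h11 | ⟨rfl, -, hr⟩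
    · exact ⟨c, hc, hTp⟩
    · simp only [Prod.mk.injEq] at h11
      obtain ⟨rfl, rfl⟩ := h11
      omega
    · exact absurd ⟨r, hr, hTp⟩ hnot

end Tableau

theorem stmt_10_general (n j : ℕ) (hj1 : 2 ≤ j) (hj2 : j ≤ n - 2)
    (T : ℕ × ℕ → ℕ) (hT : IsSYT n j T) :
    WT (n - j) (T ∘ Prod.swap) = Set.Icc 1 n \ WT j T ∧
    aT (T ∘ Prod.swap) = aT T := by
  have hj : 0 < j := by omega
  have hnj : 2 ≤ n - j := by omega
  refine ⟨?_, rfl⟩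
  rw [WT_comp_swap, WT]
  have hdich := hT.exists_firstRow_iff_not_exists_firstCol hj hnj
  by_cases hrow : ∃ c < j, T (0, c) = T (1, 1) - 1
  · rw [if_neg (hdich.1 hrow), if_pos hrow,
      hT.Icc_sdiff_image (A := {p | p.1 = 0 ∧ p.2 < j})
        (fun _ hp => (cell_iff hj hnj).2 (Or.inl hp)),
      setOf_cell_sdiff_firstRow hj hnj, image_union, image_singleton]
  · rw [if_pos (not_imp_comm.1 hdich.2 hrow), if_neg hrow, ← image_singleton,
      ← image_union, hT.Icc_sdiff_image ?_,
      setOf_cell_sdiff_union_firstRowTail hj hnj]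
    rintro p (rfl | hp) <;> rw [mem_ofPred_eq, cell_iff hj hnj]
    · exact Or.inr (Or.inl rfl)
    · exact Or.inl ⟨hp.1, hp.2.2⟩

/-- `φ(T*) = (complement of W_T, a_T)` for the transpose `T*` of `T`. -/
theorem stmt_10 (n j : ℕ) (hn : 4 ≤ n) (hj1 : 2 ≤ j) (hj2 : j ≤ n - 2)
    (T : ℕ × ℕ → ℕ) (hT : IsSYT n j T) :
    WT (n - j) (T ∘ Prod.swap) = Set.Icc 1 n \ WT j T ∧
    aT (T ∘ Prod.swap) = aT T :=
  stmt_10_general n j hj1 hj2 T hT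
end
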